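/- arXiv:0804.0046 — 3 statements merged into one kernel-verified Lean document; each statement's English description precedes it below -/
import Mathlib

section
/- For 1 ≤ i < j ≤ n and generic u ∈ ℂ (u ≠ k), define Y_{i,j}(u) = (u + k·s_{i,j})/(u − k) in the group algebra ℂ[S_n], where s_{i,j} is the transposition of i and j and k ∈ ℂ is a fixed constant. Then for 1 ≤ i < j < l ≤ n and u, v ∈ ℂ with u, v, u+v ≠ k, the Yang–Baxter equation holds: Y_{i,j}(u)·Y_{i,l}(u+v)·Y_{j,l}(v) = Y_{j,l}(v)·Y_{i,l}(u+v)·Y_{i,j}(u). -/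
/-- The Yang–Baxter operator `Y_{i,j}(u) = (u·1 + k·s_{i,j})·(u-k)⁻¹` in the group
algebra `ℂ[S_n]`, where `s_{i,j}` is the transposition of `i` and `j`. -/
noncomputable def YBop (n : ℕ) (k u : ℂ) (i j : Fin n) :
    MonoidAlgebra ℂ (Equiv.Perm (Fin n)) :=
  (u - k)⁻¹ • (u • (1 : MonoidAlgebra ℂ (Equiv.Perm (Fin n))) +
    k • MonoidAlgebra.of ℂ (Equiv.Perm (Fin n)) (Equiv.swap i j))

/-- Abstract form of the Yang–Baxter computation in any `ℂ`-algebra. -/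
lemma yb_abstract {R : Type*} [Ring R] [Algebra ℂ R] (k u v : ℂ) (A B C : R)
    (hBC : B * C = A * B) (hAC : A * C = B * A) (hCA : C * A = A * B)
    (hCB : C * B = B * A) (hAAB : A * (A * B) = B) (hCBA : C * (B * A) = B) :
    ((u - k)⁻¹ • (u • (1:R) + k • A)) * ((u + v - k)⁻¹ • ((u+v) • (1:R) + k • B)) *
      ((v - k)⁻¹ • (v • (1:R) + k • C)) =
    ((v - k)⁻¹ • (v • (1:R) + k • C)) * ((u + v - k)⁻¹ • ((u+v) • (1:R) + k • B)) *
      ((u - k)⁻¹ • (u • (1:R) + k • A)) := by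
  simp only [smul_add, add_mul, mul_add, smul_mul_assoc, mul_smul_comm, smul_smul,
    one_mul, mul_one, mul_assoc]
  simp only [hBC, hAC, hCA, hCB, hAAB, hCBA]
  module

/-- The Yang–Baxter equation with spectral parameters for the operators
`Y_{i,j}(u) = (u + k·s_{i,j})/(u-k)` in `ℂ[S_n]`. -/
theorem yang_baxter_equation {n : ℕ} (k : ℂ) (i j l : Fin n)
    (hij : i < j) (hjl : j < l) (u v : ℂ)
    (hu : u ≠ k) (hv : v ≠ k) (huv : u + v ≠ k) :
    YBop n k u i j * YBop n k (u + v) i l * YBop n k v j l =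
      YBop n k v j l * YBop n k (u + v) i l * YBop n k u i j := by
  have hij' : i ≠ j := hij.ne
  have hjl' : j ≠ l := hjl.ne
  have hil : i ≠ l := (hij.trans hjl).ne
  have e1 : Equiv.swap i l * Equiv.swap j l = Equiv.swap i j * Equiv.swap i l := by
    ext x; simp only [Equiv.Perm.mul_apply, Equiv.swap_apply_def]; split_ifs <;> simp_all
  have e2 : Equiv.swap i j * Equiv.swap j l = Equiv.swap i l * Equiv.swap i j := by
    ext x; simp only [Equiv.Perm.mul_apply, Equiv.swap_apply_def]; split_ifs <;> simp_all
  have e3 : Equiv.swap j l * Equiv.swap i j = Equiv.swap i j * Equiv.swap i l := by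
    ext x; simp only [Equiv.Perm.mul_apply, Equiv.swap_apply_def]; split_ifs <;> simp_all
  have e4 : Equiv.swap j l * Equiv.swap i l = Equiv.swap i l * Equiv.swap i j := by
    ext x; simp only [Equiv.Perm.mul_apply, Equiv.swap_apply_def]; split_ifs <;> simp_all
  have e5 : Equiv.swap i j * (Equiv.swap i j * Equiv.swap i l) = Equiv.swap i l := by
    rw [← mul_assoc, Equiv.swap_mul_self, one_mul]
  have e6 : Equiv.swap j l * (Equiv.swap i l * Equiv.swap i j) = Equiv.swap i l := by
    ext x; simp only [Equiv.Perm.mul_apply, Equiv.swap_apply_def]; split_ifs <;> simp_all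
  set σ := MonoidAlgebra.of ℂ (Equiv.Perm (Fin n)) with hσ
  exact yb_abstract k u v (σ (Equiv.swap i j)) (σ (Equiv.swap i l)) (σ (Equiv.swap j l))
    (by rw [← map_mul, ← map_mul, e1]) (by rw [← map_mul, ← map_mul, e2])
    (by rw [← map_mul, ← map_mul, e3]) (by rw [← map_mul, ← map_mul, e4])
    (by rw [← map_mul, ← map_mul, e5])
    (by rw [← map_mul, ← map_mul, e6])
end

section
/- Let W be a finite Weyl group with positive roots R^+, k a W-invariant function on R, and λ with λ(α^∨) ∉ {0, k_α} for all α ∈ R. Define the c-function c_k(λ) = ∏_{α ∈ R^+} (λ(α^∨) − k_α)/λ(α^∨) and j_w^k(λ) = ∏_{α ∈ R^+ ∩ w^{−1}R^−} (λ(α^∨)+k_α)/(λ(α^∨)−k_α) for w ∈ W. Then j_w^k(λ) = c_k(wλ)/c_k(λ) for all w ∈ W. -/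
/-!
The map `β ↦ w⁻¹β` sends `R⁺` bijectively onto `{γ ∈ R : wγ ∈ R⁺}`, which is the disjoint union of
the positive roots that `w` keeps positive and the negatives of the inversion set of `w`. Hence the
numerator `c_k(wλ)` is the product of the factors of `c_k(λ)` over the non-inversions times the
factors at `-α` over the inversions; the former cancel against `c_k(λ)`, and for each inversion `α`
the factor at `-α` divided by the factor at `α` is `(λ(α^∨) + k_α)/(λ(α^∨) - k_α)`.
-/

open Finset
open scoped Classical

namespace CFunction

variable {S G : Type*} [Semiring S] [AddCommGroup G] [Module S G]

noncomputable def inversionSet (Rp : Finset G) (w : G ≃ₗ[S] G) : Finset G :=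
  Rp.filter fun α => -(w α) ∈ Rp

section PositiveSystem

variable {M : Type*} [CommMonoid M] {R Rp : Finset G} {w : G ≃ₗ[S] G}

theorem prod_filter_symm_mem_eq (f : G → M) (hRp : Rp ⊆ R)
    (hpos : ∀ α ∈ Rp, -α ∉ Rp) (hcover : ∀ α ∈ R, α ∈ Rp ∨ -α ∈ Rp) (hwR : ∀ α ∈ R, w α ∈ R) :
    ∏ β ∈ Rp.filter (fun β => w.symm β ∈ Rp), f (w.symm β) =
      ∏ α ∈ Rp.filter (fun α => -(w α) ∉ Rp), f α := by
  refine (prod_nbij' w w.symm (fun α hα => ?_) (fun β hβ => ?_) (by simp) (by simp) (by simp)).symm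
  · obtain ⟨hα, hwα⟩ := mem_filter.1 hα
    exact mem_filter.2 ⟨(hcover _ (hwR α (hRp hα))).resolve_right hwα, by simpa using hα⟩
  · obtain ⟨hβ, hwβ⟩ := mem_filter.1 hβ
    exact mem_filter.2 ⟨hwβ, by simpa using hpos β hβ⟩

theorem prod_filter_symm_notMem_eq (f : G → M) (hRp : Rp ⊆ R)
    (hpos : ∀ α ∈ Rp, -α ∉ Rp) (hcover : ∀ α ∈ R, α ∈ Rp ∨ -α ∈ Rp)
    (hwR' : ∀ α ∈ R, w.symm α ∈ R) :
    ∏ β ∈ Rp.filter (fun β => w.symm β ∉ Rp), f (w.symm β) =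
      ∏ α ∈ inversionSet Rp w, f (-α) := by
  refine (prod_nbij' (fun α => -(w α)) (fun β => -(w.symm β)) (fun α hα => ?_) (fun β hβ => ?_)
    (by simp) (by simp) (by simp)).symm
  · obtain ⟨hα, hwα⟩ := mem_filter.1 hα
    exact mem_filter.2 ⟨hwα, by simpa using hpos α hα⟩
  · obtain ⟨hβ, hwβ⟩ := mem_filter.1 hβ
    exact mem_filter.2 ⟨(hcover _ (hwR' β (hRp hβ))).resolve_left hwβ, by simpa using hβ⟩

theorem prod_comp_symm_eq_mul_prod_inversionSet (f : G → M) (hRp : Rp ⊆ R)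
    (hpos : ∀ α ∈ Rp, -α ∉ Rp) (hcover : ∀ α ∈ R, α ∈ Rp ∨ -α ∈ Rp) (hwR : ∀ α ∈ R, w α ∈ R)
    (hwR' : ∀ α ∈ R, w.symm α ∈ R) :
    ∏ β ∈ Rp, f (w.symm β) =
      (∏ α ∈ Rp.filter (fun α => -(w α) ∉ Rp), f α) * ∏ α ∈ inversionSet Rp w, f (-α) := by
  rw [← prod_filter_mul_prod_filter_not Rp (fun β => w.symm β ∈ Rp),
    prod_filter_symm_mem_eq f hRp hpos hcover hwR,
    prod_filter_symm_notMem_eq f hRp hpos hcover hwR']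

end PositiveSystem

variable {K : Type*} [Field K]

def cFactor (L k : G → K) (α : G) : K :=
  (L α - k α) / L α

theorem cFactor_neg_div_cFactor {L k : G → K} {α : G} (hL : L (-α) = -L α) (hk : k (-α) = k α)
    (h0 : L α ≠ 0) :
    cFactor L k (-α) / cFactor L k α = (L α + k α) / (L α - k α) := by
  rw [cFactor, cFactor, hL, hk, ← neg_add', neg_div_neg_eq, div_div_div_cancel_right₀ h0]

end CFunction

open CFunction in
theorem j_eq_c_quotient_general {V : Type*} [AddCommGroup V] [Module ℝ V]
    (R Rp : Finset (Module.Dual ℝ V)) (hRp : Rp ⊆ R)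
    (hsplit : ∀ α ∈ R, (α ∈ Rp ↔ -α ∉ Rp))
    (hcover : ∀ α ∈ R, α ∈ Rp ∨ -α ∈ Rp)
    (w : Module.Dual ℝ V ≃ₗ[ℝ] Module.Dual ℝ V)
    (hwR : ∀ α ∈ R, w α ∈ R) (hwR' : ∀ α ∈ R, w.symm α ∈ R)
    (L : Module.Dual ℝ V → ℂ) (hL : ∀ α ∈ R, L (-α) = -L α)
    (k : Module.Dual ℝ V → ℂ)
    (hkneg : ∀ α ∈ R, k (-α) = k α) (hkw : ∀ α ∈ R, k (w α) = k α)
    (hreg : ∀ α ∈ R, L α ≠ 0 ∧ L α ≠ k α) :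
    (∏ α ∈ Rp.filter (fun α => -(w α) ∈ Rp), (L α + k α) / (L α - k α)) =
      (∏ α ∈ Rp, (L (w.symm α) - k α) / L (w.symm α)) /
        (∏ α ∈ Rp, (L α - k α) / L α) := by
  have hpos : ∀ α ∈ Rp, -α ∉ Rp := fun α hα => (hsplit α (hRp hα)).1 hα
  have hnonInv_ne_zero : ∏ α ∈ Rp.filter (fun α => -(w α) ∉ Rp), cFactor L k α ≠ 0 :=
    prod_ne_zero_iff.2 fun α hα =>
      have hα := hreg α (hRp (mem_filter.1 hα).1)
      div_ne_zero (sub_ne_zero.2 hα.2) hα.1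
  calc ∏ α ∈ inversionSet Rp w, (L α + k α) / (L α - k α)
      = ∏ α ∈ inversionSet Rp w, cFactor L k (-α) / cFactor L k α :=
        prod_congr rfl fun α hα =>
          have hαR := hRp (mem_filter.1 hα).1
          (cFactor_neg_div_cFactor (hL α hαR) (hkneg α hαR) (hreg α hαR).1).symm
    _ = (∏ β ∈ Rp, cFactor L k (w.symm β)) / ∏ α ∈ Rp, cFactor L k α := by
        rw [prod_div_distrib, prod_comp_symm_eq_mul_prod_inversionSet _ hRp hpos hcover hwR hwR',
          ← prod_filter_mul_prod_filter_not Rp (fun α => -(w α) ∈ Rp), mul_comm,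
          mul_div_mul_right _ _ hnonInv_ne_zero, inversionSet]
    _ = _ := by
        congr 1
        refine prod_congr rfl fun β hβ => ?_
        have hkβ : k β = k (w.symm β) := by simpa using hkw _ (hwR' β (hRp hβ))
        rw [cFactor, hkβ]

/-- `j_w^k(λ) = c_k(wλ)/c_k(λ)` for `w` in the finite Weyl group:
the product of `(λ(α^∨)+k_α)/(λ(α^∨)-k_α)` over the inversion set
`R⁺ ∩ w⁻¹R⁻ = {α ∈ R⁺ : wα ∈ R⁻}` equals the quotient of the c-functions,
where `c_k(λ) = ∏_{α ∈ R⁺} (λ(α^∨) - k_α)/λ(α^∨)` and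
`(wλ)(α^∨) = λ((w⁻¹α)^∨)`. Here `L α` denotes `λ(α^∨)`, `w` acts linearly on
the roots preserving `R` and the `W`-invariant multiplicity `k`, and
`λ(α^∨) ∉ {0, k_α}` for all `α ∈ R`. -/
theorem j_eq_c_quotient {V : Type*} [AddCommGroup V] [Module ℝ V]
    (R Rp : Finset (Module.Dual ℝ V)) (hRp : Rp ⊆ R)
    (hneg : ∀ α ∈ R, -α ∈ R)
    (hsplit : ∀ α ∈ R, (α ∈ Rp ↔ -α ∉ Rp))
    (hcover : ∀ α ∈ R, α ∈ Rp ∨ -α ∈ Rp)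
    (w : Module.Dual ℝ V ≃ₗ[ℝ] Module.Dual ℝ V)
    (hwR : ∀ α ∈ R, w α ∈ R) (hwR' : ∀ α ∈ R, w.symm α ∈ R)
    (L : Module.Dual ℝ V → ℂ) (hL : ∀ α ∈ R, L (-α) = -L α)
    (k : Module.Dual ℝ V → ℂ)
    (hkneg : ∀ α ∈ R, k (-α) = k α) (hkw : ∀ α ∈ R, k (w α) = k α)
    (hreg : ∀ α ∈ R, L α ≠ 0 ∧ L α ≠ k α) :
    (∏ α ∈ Rp.filter (fun α => -(w α) ∈ Rp), (L α + k α) / (L α - k α)) =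
      (∏ α ∈ Rp, (L (w.symm α) - k α) / L (w.symm α)) /
        (∏ α ∈ Rp, (L α - k α) / L α) :=
  j_eq_c_quotient_general R Rp hRp hsplit hcover w hwR hwR' L hL k hkneg hkw hreg
end

section
/- Let ξ ∈ V* be nonzero and define the divided difference operator Δ_ξ on the polynomial algebra S(V_ℂ) (polynomials on V*) by Δ_ξ(p) = (s_ξ(p) − p)/ξ^∨, where s_ξ is the algebra automorphism induced by the reflection. Let (p, f) = (p(∂)f)(0) be the pairing of S(V_ℂ) with analytic functions on V, where p(∂) is the constant-coefficient differential operator associated to p. Then for all p ∈ S(V_ℂ) and f real-analytic, (Δ_ξ(p), f) = −(p, I(ξ)f), where (I(ξ)f)(v) = ∫_0^{ξ(v)} f(v − t·ξ^∨) dt. -/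
/-!
Put `ℓ = ξ`, `u = ξ^∨` (so `ℓ u = 2`), `s = s_ξ` and `I = I(ξ)`. Applying the involution `s` to
`u · q = s(p) - p` and using `s(u) = -u` shows that `q` is `s`-invariant. Under the pairing,
multiplication by a vector `w ∈ V ⊂ S(V_ℂ)` becomes the directional derivative `∂_w`, `s` acting
on polynomials becomes `f ↦ f ∘ s`, and the pairing is linear in smooth `f`. Substituting in the
integral gives `I f ∘ s = -I f`, and the fundamental theorem of calculus gives
`∂_u (I f) = f ∘ s + f`. Hence `(u · q, I f)` equals both
`(q, f ∘ s + f) = (s q, f) + (q, f) = 2 (q, f)` and `(s p - p, I f) = -2 (p, I f)`.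
-/

open MvPolynomial Set Function Filter
open scoped ContDiff RealInnerProductSpace

universe w

theorem hasFDerivAt_intervalIntegral_of_contDiff {E F : Type*} [NormedAddCommGroup E]
    [NormedSpace ℝ E] [NormedAddCommGroup F] [NormedSpace ℝ F] {G : E → ℝ → F}
    (hG : ContDiff ℝ 1 (uncurry G)) (a b : ℝ) (x₀ : E) :
    HasFDerivAt (fun x => ∫ t in a..b, G x t)
      (∫ t in a..b, (fderiv ℝ (uncurry G) (x₀, t)).comp (ContinuousLinearMap.inl ℝ E ℝ)) x₀ := by
  set G' : E → ℝ → E →L[ℝ] F := fun x t =>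
    (fderiv ℝ (uncurry G) (x, t)).comp (ContinuousLinearMap.inl ℝ E ℝ)
  have hG'c : Continuous (uncurry G') :=
    (hG.continuous_fderiv one_ne_zero).clm_comp continuous_const
  obtain ⟨M, hM⟩ := (isCompact_singleton.prod isCompact_uIcc).exists_bound_of_continuousOn
    (hG'c.continuousOn (s := {x₀} ×ˢ uIcc a b))
  -- the tube lemma spreads the bound from `{x₀} × [a, b]` to a neighbourhood of `x₀`
  obtain ⟨U, T, hU, -, hx₀U, hK, hUK⟩ := generalized_tube_lemma isCompact_singleton isCompact_uIcc
    (isOpen_lt (continuous_norm.comp hG'c) continuous_const)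
    (fun p hp => (hM p hp).trans_lt (lt_add_one M) :
      {x₀} ×ˢ uIcc a b ⊆ {p | ‖uncurry G' p‖ < M + 1})
  refine intervalIntegral.hasFDerivAt_integral_of_dominated_of_fderiv_le (F := G) (F' := G')
    (bound := fun _ => M + 1) (hU.mem_nhds (hx₀U rfl)) (Eventually.of_forall fun x => ?_)
    ?_ ?_ ?_ intervalIntegrable_const ?_
  · exact (hG.continuous.comp (Continuous.prodMk_right x)).aestronglyMeasurable
  · exact (hG.continuous.comp (Continuous.prodMk_right x₀)).intervalIntegrable a b
  · exact (hG'c.comp (Continuous.prodMk_right x₀)).aestronglyMeasurable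
  · refine Eventually.of_forall fun t ht x hx => ?_
    have : ‖G' x t‖ < M + 1 := hUK (mk_mem_prod hx (hK (uIoc_subset_uIcc ht)))
    exact this.le
  · refine Eventually.of_forall fun t _ x _ => ?_
    exact (hG.differentiable one_ne_zero (x, t)).hasFDerivAt.comp x
      (hasFDerivAt_prodMk_left (𝕜 := ℝ) x t)

-- `E` and `F` share a universe because the induction passes to `E →L[ℝ] F`-valued integrands.
theorem contDiff_intervalIntegral {E F : Type w} [NormedAddCommGroup E] [NormedSpace ℝ E]
    [NormedAddCommGroup F] [NormedSpace ℝ F] {k : ℕ} {G : E → ℝ → F}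
    (hG : ContDiff ℝ k (uncurry G)) (a b : ℝ) : ContDiff ℝ k (fun x => ∫ t in a..b, G x t) := by
  induction k generalizing F with
  | zero =>
    exact contDiff_zero.2 (intervalIntegral.continuous_parametric_intervalIntegral_of_continuous'
      hG.continuous a b)
  | succ k ih =>
    refine contDiff_succ_iff_hasFDerivAt.2 ⟨_, ih (G := fun x t =>
      (fderiv ℝ (uncurry G) (x, t)).comp (ContinuousLinearMap.inl ℝ E ℝ)) ?_,
      hasFDerivAt_intervalIntegral_of_contDiff (hG.of_le (by norm_cast; omega)) a b⟩
    exact (hG.fderiv_right (by norm_cast)).clm_comp contDiff_const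

section SegmentIntegral

variable {E F : Type w} [NormedAddCommGroup E] [NormedSpace ℝ E] [NormedAddCommGroup F]
  [NormedSpace ℝ F] (ℓ : E →L[ℝ] ℝ) (u : E)

/-- The operator `I(ξ)` of the paper for `ℓ = ξ` and `u = ξ^∨`: it integrates `f` along the
segment from `v` to its reflection `v - ℓ v • u`. -/
noncomputable def segmentIntegral (f : E → F) (v : E) : F :=
  ∫ t in (0 : ℝ)..ℓ v, f (v - t • u)

lemma segmentIntegral_eq_smul (f : E → F) (v : E) :
    segmentIntegral ℓ u f v = ℓ v • ∫ s in (0 : ℝ)..1, f (v - (ℓ v * s) • u) := by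
  rw [intervalIntegral.smul_integral_comp_mul_left (fun t => f (v - t • u)), mul_zero, mul_one,
    segmentIntegral]

lemma contDiff_segmentIntegral {k : ℕ} {f : E → F} (hf : ContDiff ℝ k f) :
    ContDiff ℝ k (segmentIntegral ℓ u f) := by
  have hG : ContDiff ℝ k fun p : E × ℝ => f (p.1 - (ℓ p.1 * p.2) • u) :=
    hf.comp <| contDiff_fst.sub <|
      ((ℓ.contDiff.comp contDiff_fst).mul contDiff_snd).smul contDiff_const
  rw [funext (segmentIntegral_eq_smul ℓ u f)]
  exact ℓ.contDiff.smul (contDiff_intervalIntegral hG 0 1)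

variable {ℓ u}

lemma segmentIntegral_reflection (hℓ : ℓ u = 2) (f : E → F) (v : E) :
    segmentIntegral ℓ u f (v - ℓ v • u) = -segmentIntegral ℓ u f v := by
  have hshift (t : ℝ) : v - ℓ v • u - t • u = v - (t + ℓ v) • u := by rw [add_smul]; abel
  simp only [segmentIntegral, map_sub, map_smul, hℓ, smul_eq_mul, hshift,
    intervalIntegral.integral_comp_add_right (fun t => f (v - t • u))]
  rw [intervalIntegral.integral_symm]
  ring_nf

lemma fderiv_segmentIntegral_apply [CompleteSpace F] (hℓ : ℓ u = 2) {f : E → F}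
    (hf : Continuous f) {v : E} (hd : DifferentiableAt ℝ (segmentIntegral ℓ u f) v) :
    fderiv ℝ (segmentIntegral ℓ u f) v u = f (v - ℓ v • u) + f v := by
  set g : ℝ → F := fun t => f (v - t • u)
  have hg : Continuous g := by fun_prop
  have hline (s : ℝ) : segmentIntegral ℓ u f (v + s • u) =
      (∫ t in (0 : ℝ)..ℓ v + s, g t) - ∫ t in (0 : ℝ)..-s, g t := by
    have hshift :
        segmentIntegral ℓ u f (v + s • u) = ∫ t in (0 : ℝ)..ℓ v + 2 * s, g (t - s) := by
      simp only [segmentIntegral, g, map_add, map_smul, hℓ, smul_eq_mul, sub_smul]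
      rw [mul_comm]
      simp only [sub_sub_eq_add_sub, add_sub_right_comm]
    rw [hshift, intervalIntegral.integral_comp_sub_right g s,
      intervalIntegral.integral_interval_sub_left (hg.intervalIntegrable _ _)
        (hg.intervalIntegrable _ _)]
    ring_nf
  have hderiv : HasLineDerivAt ℝ (segmentIntegral ℓ u f) (g (ℓ v) + g 0) v u := by
    have h₁ := (hg.integral_hasStrictDerivAt 0 (ℓ v + 0)).hasDerivAt.comp_const_add (ℓ v) 0
    have h₂ := (hg.integral_hasStrictDerivAt 0 (-0)).hasDerivAt.scomp (0 : ℝ) (hasDerivAt_neg 0)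
    unfold HasLineDerivAt
    simp only [hline]
    convert h₁.sub h₂ using 1
    · rfl
    · simp
  rw [← hd.lineDeriv_eq_fderiv, hderiv.lineDeriv]
  simp [g]

end SegmentIntegral

lemma contDiff_fderiv_apply {E F : Type*} [NormedAddCommGroup E] [NormedSpace ℝ E]
    [NormedAddCommGroup F] [NormedSpace ℝ F] {f : E → F} (hf : ContDiff ℝ ∞ f) (w : E) :
    ContDiff ℝ ∞ fun x => fderiv ℝ f x w :=
  (hf.fderiv_right (by simp)).clm_apply contDiff_const

section Pairing

variable {n : ℕ}

/-- A vector `w ∈ V` seen as a linear polynomial, i.e. as an element of `V ⊂ S(V_ℂ)`. -/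
noncomputable def linearPoly : EuclideanSpace ℝ (Fin n) →ₗ[ℝ] MvPolynomial (Fin n) ℂ where
  toFun w := ∑ j, (w j : ℂ) • X j
  map_add' v w := by simp [add_smul, Finset.sum_add_distrib]
  map_smul' r w := by simp [Finset.smul_sum, smul_smul, ← Complex.real_smul]

lemma linearPoly_apply (w : EuclideanSpace ℝ (Fin n)) :
    linearPoly w = ∑ j, (w j : ℂ) • X j :=
  rfl

lemma linearPoly_single (i : Fin n) : linearPoly (EuclideanSpace.single i 1) = X i := by
  simp [linearPoly_apply]

lemma coeff_linearPoly (w : EuclideanSpace ℝ (Fin n)) (i : Fin n) :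
    coeff (Finsupp.single i 1) (linearPoly w) = w i := by
  classical
  simp [linearPoly_apply, coeff_sum, coeff_X, Finsupp.single_left_inj]

lemma linearPoly_injective : Function.Injective (linearPoly (n := n)) := by
  intro v w h
  ext i
  simpa [coeff_linearPoly] using congrArg (coeff (Finsupp.single i 1)) h

section

variable (A : EuclideanSpace ℝ (Fin n) →L[ℝ] EuclideanSpace ℝ (Fin n))
  {σ : MvPolynomial (Fin n) ℂ →ₐ[ℂ] MvPolynomial (Fin n) ℂ}

lemma map_linearPoly (hσ : ∀ i, σ (X i) = linearPoly (A (EuclideanSpace.single i 1)))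
    (w : EuclideanSpace ℝ (Fin n)) : σ (linearPoly w) = linearPoly (A w) := by
  conv_rhs => rw [← (EuclideanSpace.basisFun (Fin n) ℝ).sum_repr w]
  simp [linearPoly_apply w, hσ, ← algebraMap_smul ℂ]

lemma map_map_of_involutive (hσ : ∀ i, σ (X i) = linearPoly (A (EuclideanSpace.single i 1)))
    (hA : Involutive A) (p : MvPolynomial (Fin n) ℂ) : σ (σ p) = p := by
  suffices σ.comp σ = AlgHom.id ℂ _ from congrArg (· p) this
  refine algHom_ext fun i => ?_
  simp [hσ, map_linearPoly A hσ, hA _, linearPoly_single]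

end

lemma invariant_of_mul_eq_apply_sub {R F : Type*} [CommRing R] [IsDomain R] [FunLike F R R]
    [RingHomClass F R R] {σ : F} (hσ : ∀ a, σ (σ a) = a) {P p q : R} (hP : σ P = -P)
    (hP0 : P ≠ 0) (hq : P * q = σ p - p) :
    σ q = q := by
  have h := congrArg σ hq
  rw [map_mul, map_sub, hσ, hP] at h
  exact mul_left_cancel₀ (neg_ne_zero.2 hP0) (by rw [h, neg_mul, hq]; ring)

/-- The rules characterizing the pairing `(p, f) = (p(∂) f)(0)`. -/
structure IsDerivativePairing
    (pair : MvPolynomial (Fin n) ℂ → (EuclideanSpace ℝ (Fin n) → ℂ) → ℂ) : Prop where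
  one : ∀ f, pair 1 f = f 0
  add : ∀ p q f, pair (p + q) f = pair p f + pair q f
  smul : ∀ (c : ℂ) p f, pair (c • p) f = c * pair p f
  X_mul : ∀ i p f, pair (X i * p) f = pair p (fun x => fderiv ℝ f x (EuclideanSpace.single i 1))

namespace IsDerivativePairing

variable {pair : MvPolynomial (Fin n) ℂ → (EuclideanSpace ℝ (Fin n) → ℂ) → ℂ}
  (hP : IsDerivativePairing pair)
include hP

def linearMap (f : EuclideanSpace ℝ (Fin n) → ℂ) :
    MvPolynomial (Fin n) ℂ →ₗ[ℂ] ℂ where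
  toFun p := pair p f
  map_add' p q := hP.add p q f
  map_smul' c p := hP.smul c p f

lemma sub (p q : MvPolynomial (Fin n) ℂ) (f : EuclideanSpace ℝ (Fin n) → ℂ) :
    pair (p - q) f = pair p f - pair q f :=
  map_sub (hP.linearMap f) p q

lemma sum {ι : Type*} (s : Finset ι) (p : ι → MvPolynomial (Fin n) ℂ)
    (f : EuclideanSpace ℝ (Fin n) → ℂ) :
    pair (∑ i ∈ s, p i) f = ∑ i ∈ s, pair (p i) f :=
  map_sum (hP.linearMap f) p s

lemma const (a : ℂ) (f : EuclideanSpace ℝ (Fin n) → ℂ) : pair (C a) f = a * f 0 := by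
  rw [← mul_one (C a), ← smul_eq_C_mul, hP.smul, hP.one]

lemma add_right (p : MvPolynomial (Fin n) ℂ) {f g : EuclideanSpace ℝ (Fin n) → ℂ}
    (hf : ContDiff ℝ ∞ f) (hg : ContDiff ℝ ∞ g) :
    pair p (f + g) = pair p f + pair p g := by
  induction p using MvPolynomial.induction_on generalizing f g with
  | C a => simp [hP.const, mul_add]
  | add p q hp hq => simp only [hP.add, hp hf hg, hq hf hg]; ring
  | mul_X p i ih =>
    have hfg : (fun x => fderiv ℝ (f + g) x (EuclideanSpace.single i 1)) =
        (fun x => fderiv ℝ f x (EuclideanSpace.single i 1)) +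
          (fun x => fderiv ℝ g x (EuclideanSpace.single i 1)) := by
      ext x
      simp [fderiv_add (hf.differentiable (by simp) x) (hg.differentiable (by simp) x)]
    rw [mul_comm, hP.X_mul, hP.X_mul, hP.X_mul, hfg,
      ih (contDiff_fderiv_apply hf _) (contDiff_fderiv_apply hg _)]

lemma smul_right (p : MvPolynomial (Fin n) ℂ) (c : ℂ) {f : EuclideanSpace ℝ (Fin n) → ℂ}
    (hf : ContDiff ℝ ∞ f) : pair p (c • f) = c * pair p f := by
  induction p using MvPolynomial.induction_on generalizing f with
  | C a => simp [hP.const]; ring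
  | add p q hp hq => simp only [hP.add, hp hf, hq hf]; ring
  | mul_X p i ih =>
    have hcf : (fun x => fderiv ℝ (c • f) x (EuclideanSpace.single i 1)) =
        c • (fun x => fderiv ℝ f x (EuclideanSpace.single i 1)) := by
      ext x
      simp [fderiv_const_smul_field]
    rw [mul_comm, hP.X_mul, hP.X_mul, hcf, ih (contDiff_fderiv_apply hf _)]

lemma sum_right (p : MvPolynomial (Fin n) ℂ) {ι : Type*} (s : Finset ι)
    {f : ι → EuclideanSpace ℝ (Fin n) → ℂ} (hf : ∀ i ∈ s, ContDiff ℝ ∞ (f i)) :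
    pair p (∑ i ∈ s, f i) = ∑ i ∈ s, pair p (f i) := by
  classical
  induction s using Finset.induction_on with
  | empty => simpa using hP.smul_right p 0 (contDiff_const (c := (0 : ℂ)))
  | insert j s hj ih =>
    have hs : ContDiff ℝ ∞ (∑ i ∈ s, f i) := by
      rw [Finset.sum_fn]
      exact ContDiff.sum fun i hi => hf i (Finset.mem_insert_of_mem hi)
    rw [Finset.sum_insert hj, Finset.sum_insert hj,
      hP.add_right p (hf j (Finset.mem_insert_self j s)) hs,
      ih fun i hi => hf i (Finset.mem_insert_of_mem hi)]

lemma linearPoly_mul (w : EuclideanSpace ℝ (Fin n)) (p : MvPolynomial (Fin n) ℂ)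
    {f : EuclideanSpace ℝ (Fin n) → ℂ} (hf : ContDiff ℝ ∞ f) :
    pair (linearPoly w * p) f = pair p (fun x => fderiv ℝ f x w) := by
  set D : Fin n → EuclideanSpace ℝ (Fin n) → ℂ :=
    fun j x => fderiv ℝ f x (EuclideanSpace.single j 1)
  have hD (j : Fin n) : ContDiff ℝ ∞ (D j) := contDiff_fderiv_apply hf _
  have hw : (fun x => fderiv ℝ f x w) = ∑ j, (w j : ℂ) • D j := by
    ext x
    conv_lhs => rw [← (EuclideanSpace.basisFun (Fin n) ℝ).sum_repr w]
    simp [D, Complex.real_smul]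
  rw [hw, hP.sum_right p _ (f := fun j => (w j : ℂ) • D j)
      fun j _ => by exact (hD j).const_smul (w j : ℂ),
    linearPoly_apply, Finset.sum_mul, hP.sum]
  refine Finset.sum_congr rfl fun j _ => ?_
  rw [smul_mul_assoc, hP.smul, hP.X_mul, hP.smul_right p _ (hD j)]

lemma map_comp (A : EuclideanSpace ℝ (Fin n) →L[ℝ] EuclideanSpace ℝ (Fin n))
    {σ : MvPolynomial (Fin n) ℂ →ₐ[ℂ] MvPolynomial (Fin n) ℂ}
    (hσ : ∀ i, σ (X i) = linearPoly (A (EuclideanSpace.single i 1)))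
    (p : MvPolynomial (Fin n) ℂ) {h : EuclideanSpace ℝ (Fin n) → ℂ} (hh : ContDiff ℝ ∞ h) :
    pair (σ p) h = pair p (h ∘ A) := by
  induction p using MvPolynomial.induction_on generalizing h with
  | C a =>
    rw [← MvPolynomial.algebraMap_eq, σ.commutes, MvPolynomial.algebraMap_eq, hP.const, hP.const]
    simp
  | add p q hp hq => rw [map_add, hP.add, hP.add, hp hh, hq hh]
  | mul_X p i ih =>
    have hchain : (fun x => fderiv ℝ (h ∘ A) x (EuclideanSpace.single i 1)) =
        (fun x => fderiv ℝ h x (A (EuclideanSpace.single i 1))) ∘ A := by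
      ext x
      simp [((hh.differentiable (by simp) (A x)).hasFDerivAt.comp x A.hasFDerivAt).fderiv]
    rw [map_mul, hσ, mul_comm, hP.linearPoly_mul _ _ hh, ih (contDiff_fderiv_apply hh _),
      mul_comm, hP.X_mul, hchain]

theorem pair_eq_neg_pair_segmentIntegral {ℓ : EuclideanSpace ℝ (Fin n) →L[ℝ] ℝ}
    {u : EuclideanSpace ℝ (Fin n)} (hℓ : ℓ u = 2)
    {σ : MvPolynomial (Fin n) ℂ →ₐ[ℂ] MvPolynomial (Fin n) ℂ}
    (hσ : ∀ i, σ (X i) = X i - (ℓ (EuclideanSpace.single i 1) : ℂ) • linearPoly u)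
    {f : EuclideanSpace ℝ (Fin n) → ℂ} (hf : ContDiff ℝ ∞ f) {p q : MvPolynomial (Fin n) ℂ}
    (hq : linearPoly u * q = σ p - p) :
    pair q f = -pair p (segmentIntegral ℓ u f) := by
  set S : EuclideanSpace ℝ (Fin n) →L[ℝ] EuclideanSpace ℝ (Fin n) :=
    LinearMap.toContinuousLinearMap (Module.reflection (f := (ℓ : _ →ₗ[ℝ] ℝ)) hℓ).toLinearMap
  have hS (v : EuclideanSpace ℝ (Fin n)) : S v = v - ℓ v • u := Module.reflection_apply v hℓ
  have hσS (i : Fin n) : σ (X i) = linearPoly (S (EuclideanSpace.single i 1)) := by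
    rw [hσ, hS, map_sub, map_smul, linearPoly_single, ← algebraMap_smul ℂ]
    rfl
  have hσq : σ q = q := by
    refine invariant_of_mul_eq_apply_sub
      (map_map_of_involutive S hσS (Module.involutive_reflection hℓ)) ?_ ?_ hq
    · rw [map_linearPoly S hσS, show S u = -u from Module.reflection_apply_self hℓ, map_neg]
    · refine (map_ne_zero_iff _ linearPoly_injective).2 fun hu => ?_
      simp [hu] at hℓ
  set I := segmentIntegral ℓ u f
  have hI : ContDiff ℝ ∞ I :=
    contDiff_infty.2 fun k => contDiff_segmentIntegral _ _ (contDiff_infty.1 hf k)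
  have hDI : (fun v => fderiv ℝ I v u) = f ∘ S + f := by
    ext v
    rw [fderiv_segmentIntegral_apply hℓ hf.continuous (hI.differentiable (by simp) v)]
    simp [hS]
  have hIS : I ∘ S = (-1 : ℂ) • I := by
    ext v
    simp [hS, I, ← segmentIntegral_reflection hℓ]
  have hq_side : pair (linearPoly u * q) I = 2 * pair q f := by
    rw [hP.linearPoly_mul u q hI, hDI, hP.add_right q (hf.comp S.contDiff) hf,
      ← hP.map_comp S hσS q hf, hσq]
    ring
  have hp_side : pair (linearPoly u * q) I = -2 * pair p I := by
    rw [hq, hP.sub, hP.map_comp S hσS p hI, hIS, hP.smul_right p _ hI]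
    ring
  linear_combination (hq_side.symm.trans hp_side) / 2

end IsDerivativePairing

end Pairing

/-- Gutkin's adjointness: the divided difference operator `Δ_ξ` is adjoint to
`-I(ξ)` with respect to the pairing `(p, f) = (p(∂)f)(0)`.

Work on `V = EuclideanSpace ℝ (Fin n)`, identifying `S(V_ℂ)` with
`MvPolynomial (Fin n) ℂ` (the variable `X i` corresponding to the basis vector
`e i ∈ V`). The pairing `pair p f = (p(∂)f)(0)` is characterized by the listed
hypotheses (linearity in `p`, `pair 1 f = f 0`, and
`pair (X i · p) f = pair p (∂_i f)`). For `ξ ≠ 0`, `ξ^∨ = (2/‖ξ‖²)·ξ`; the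
reflection `s_ξ` acts on polynomials by the algebra map `σ` with
`σ(X i) = X i - ξ(e i)·(ξ^∨ as polynomial)`, and `Δ_ξ(p)` is the polynomial `q`
with `(ξ^∨)·q = σ(p) - p`. Then for real-analytic `f`,
`(Δ_ξ(p), f) = -(p, I(ξ)f)` where `(I(ξ)f)(v) = ∫_0^{⟨ξ,v⟩} f(v - t·ξ^∨) dt`. -/
theorem divided_difference_adjoint_integral {n : ℕ}
    (pair : MvPolynomial (Fin n) ℂ → (EuclideanSpace ℝ (Fin n) → ℂ) → ℂ)
    (hpair_one : ∀ f, pair 1 f = f 0)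
    (hpair_add : ∀ p q f, pair (p + q) f = pair p f + pair q f)
    (hpair_smul : ∀ (c : ℂ) (p) (f), pair (c • p) f = c * pair p f)
    (hpair_X : ∀ (i : Fin n) (p) (f : EuclideanSpace ℝ (Fin n) → ℂ),
      pair (X i * p) f =
        pair p (fun x => fderiv ℝ f x (EuclideanSpace.single i 1)))
    (ξ : EuclideanSpace ℝ (Fin n)) (hξ : ξ ≠ 0)
    (f : EuclideanSpace ℝ (Fin n) → ℂ) (hf : ∀ x, AnalyticAt ℝ f x)
    (σ : MvPolynomial (Fin n) ℂ →ₐ[ℂ] MvPolynomial (Fin n) ℂ)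
    (hσ : ∀ i, σ (X i) =
      X i - ∑ j, (((2 / ‖ξ‖ ^ 2) * (ξ i * ξ j) : ℝ) : ℂ) • X j)
    (p q : MvPolynomial (Fin n) ℂ)
    (hq : (∑ j, (((2 / ‖ξ‖ ^ 2) * ξ j : ℝ) : ℂ) • X j) * q = σ p - p) :
    pair q f =
      - pair p (fun v => ∫ t in (0 : ℝ)..((inner ℝ ξ v : ℝ)),
          f (v - t • ((2 / ‖ξ‖ ^ 2) • ξ))) := by
  set u := (2 / ‖ξ‖ ^ 2) • ξ
  have hℓ : innerSL ℝ ξ u = 2 := by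
    simp [u, norm_ne_zero_iff.2 hξ]
  have hσ' (i : Fin n) :
      σ (X i) = X i - (innerSL ℝ ξ (EuclideanSpace.single i 1) : ℂ) • linearPoly u := by
    rw [hσ, linearPoly_apply, Finset.smul_sum]
    refine congrArg _ (Finset.sum_congr rfl fun j _ => ?_)
    simp [u, EuclideanSpace.inner_single_right, smul_smul, mul_left_comm]
  have hq' : linearPoly u * q = σ p - p := by
    rw [← hq, linearPoly_apply]
    simp [u]
  exact IsDerivativePairing.pair_eq_neg_pair_segmentIntegral
    ⟨hpair_one, hpair_add, hpair_smul, hpair_X⟩ hℓ hσ'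
    (AnalyticOnNhd.contDiff fun x _ => hf x) hq'
end
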